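/- Let (E,𝓜) be a cut system, e ∈ E, and let e₁, e₂ ∉ E be two new elements. Define E' = (E∖{e}) ∪ {e₁,e₂} and 𝓜' = {M ∈ 𝓜 : e ∉ M} ∪ {(M∖{e}) ∪ {e₁,e₂} : M ∈ 𝓜, e ∈ M} (the cut system obtained by splitting e into two parallel edges e₁, e₂). Let c be a positive capacity vector on E and c' a positive capacity vector on E' with c'(e₁) + c'(e₂) = c(e) and c'(f) = c(f) for all f ∈ E∖{e}. Then the max-flow values agree, F'(c') = F(c), and the MC payoffs satisfy MC'_{e₁}(c') + MC'_{e₂}(c') = MC_e(c) and MC'_f(c') = MC_f(c) for all f ∈ E∖{e}. Consequently the MC mechanism is both split-proof and merge-proof. -/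

import Mathlib

open Finset

/-- The max-flow value of a cut system `𝓜` with capacities `c`:
by max-flow–min-cut, `flowF 𝓜 c = min_{M ∈ 𝓜} c(M)`. -/
noncomputable def flowF {α : Type*} [DecidableEq α]
    (𝓜 : Finset (Finset α)) (c : α → ℝ) : ℝ :=
  sInf ((fun M => ∑ e ∈ M, c e) '' (𝓜 : Set (Finset α)))

/-- The MC mechanism: player `i` receives
`(F(c)/|𝓜|) · Σ_{M ∈ 𝓜, i ∈ M} c(i)/c(M)`. -/
noncomputable def MC {α : Type*} [DecidableEq α]
    (𝓜 : Finset (Finset α)) (c : α → ℝ) (i : α) : ℝ :=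
  flowF 𝓜 c / (𝓜.card : ℝ) *
    ∑ M ∈ 𝓜.filter (fun M => i ∈ M), c i / ∑ e ∈ M, c e

/-- The MC mechanism is split-proof and merge-proof: splitting an edge `e` into two
parallel edges `e₁, e₂` whose capacities sum to that of `e` (equivalently, merging two
parallel edges into one) leaves the max-flow value, the total payoff of the split edge,
and the payoff of every other edge unchanged. -/
theorem MC_split_merge_proof {α : Type*} [DecidableEq α]
    (E : Finset α) (𝓜 : Finset (Finset α))
    (h𝓜 : 𝓜.Nonempty) (hMne : ∀ M ∈ 𝓜, M.Nonempty) (hME : ∀ M ∈ 𝓜, M ⊆ E)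
    (e e₁ e₂ : α) (heE : e ∈ E) (he₁ : e₁ ∉ E) (he₂ : e₂ ∉ E) (h12 : e₁ ≠ e₂)
    (𝓜' : Finset (Finset α))
    (h𝓜' : 𝓜' = 𝓜.filter (fun M => e ∉ M) ∪
      (𝓜.filter (fun M => e ∈ M)).image (fun M => M.erase e ∪ {e₁, e₂}))
    (c c' : α → ℝ) (hc : ∀ f ∈ E, 0 < c f)
    (hc' : ∀ f ∈ E.erase e ∪ {e₁, e₂}, 0 < c' f)
    (hsum : c' e₁ + c' e₂ = c e) (hoff : ∀ f ∈ E.erase e, c' f = c f) :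
    flowF 𝓜' c' = flowF 𝓜 c ∧
    MC 𝓜' c' e₁ + MC 𝓜' c' e₂ = MC 𝓜 c e ∧
    ∀ f ∈ E.erase e, MC 𝓜' c' f = MC 𝓜 c f := by
  classical
  set φ : Finset α → Finset α := fun M => if e ∈ M then M.erase e ∪ {e₁, e₂} else M with hφ
  have hsub : ∀ M ∈ 𝓜, e₁ ∉ M ∧ e₂ ∉ M := fun M hM =>
    ⟨fun h => he₁ (hME M hM h), fun h => he₂ (hME M hM h)⟩
  have hmemφ : ∀ M ∈ 𝓜, ∀ f, f ∈ E → f ≠ e → (f ∈ φ M ↔ f ∈ M) := by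
    intro M hM f hfE hfe
    have hfe₁ : f ≠ e₁ := fun h => he₁ (h ▸ hfE)
    have hfe₂ : f ≠ e₂ := fun h => he₂ (h ▸ hfE)
    by_cases h : e ∈ M <;>
      simp [hφ, h, Finset.mem_union, Finset.mem_erase, hfe, hfe₁, hfe₂]
  have he₁φ : ∀ M ∈ 𝓜, (e₁ ∈ φ M ↔ e ∈ M) := by
    intro M hM
    by_cases h : e ∈ M <;> simp [hφ, h, (hsub M hM).1]
  have he₂φ : ∀ M ∈ 𝓜, (e₂ ∈ φ M ↔ e ∈ M) := by
    intro M hM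
    by_cases h : e ∈ M <;> simp [hφ, h, (hsub M hM).2]
  have hsumφ : ∀ M ∈ 𝓜, ∑ f ∈ φ M, c' f = ∑ f ∈ M, c f := by
    intro M hM
    by_cases h : e ∈ M
    · have hdisj : Disjoint (M.erase e) ({e₁, e₂} : Finset α) := by
        rw [Finset.disjoint_right]
        intro a ha
        simp only [Finset.mem_insert, Finset.mem_singleton] at ha
        rcases ha with rfl | rfl
        · exact fun h' => (hsub M hM).1 (Finset.mem_of_mem_erase h')
        · exact fun h' => (hsub M hM).2 (Finset.mem_of_mem_erase h')
      have h1 : ∑ f ∈ M.erase e, c' f = ∑ f ∈ M.erase e, c f :=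
        Finset.sum_congr rfl fun f hf => hoff f
          (Finset.mem_erase.2 ⟨(Finset.mem_erase.1 hf).1, hME M hM (Finset.mem_of_mem_erase hf)⟩)
      have h2 : ∑ f ∈ ({e₁, e₂} : Finset α), c' f = c' e₁ + c' e₂ := Finset.sum_pair h12
      rw [hφ]
      simp only [if_pos h]
      rw [Finset.sum_union hdisj, h1, h2, hsum]
      exact Finset.sum_erase_add M _ h
    · rw [hφ]
      simp only [if_neg h]
      exact Finset.sum_congr rfl fun f hf => hoff f
        (Finset.mem_erase.2 ⟨fun hfe => h (hfe ▸ hf), hME M hM hf⟩)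
  have hinj : ∀ M ∈ 𝓜, ∀ N ∈ 𝓜, φ M = φ N → M = N := by
    intro M hM N hN hMN
    by_cases h1 : e ∈ M <;> by_cases h2 : e ∈ N
    · ext x
      by_cases hx : x = e
      · simp [hx, h1, h2]
      constructor
      · intro hxM
        exact (hmemφ N hN x (hME M hM hxM) hx).1
          (hMN ▸ (hmemφ M hM x (hME M hM hxM) hx).2 hxM)
      · intro hxN
        exact (hmemφ M hM x (hME N hN hxN) hx).1
          (hMN ▸ (hmemφ N hN x (hME N hN hxN) hx).2 hxN)
    · exact absurd ((he₁φ N hN).1 (hMN ▸ (he₁φ M hM).2 h1)) h2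
    · exact absurd ((he₁φ M hM).1 (hMN.symm ▸ (he₁φ N hN).2 h2)) h1
    · simpa [hφ, h1, h2] using hMN
  have h𝓜'img : 𝓜' = 𝓜.image φ := by
    have h1 : (𝓜.filter (fun M => e ∈ M)).image φ
        = (𝓜.filter (fun M => e ∈ M)).image (fun M => M.erase e ∪ {e₁, e₂}) :=
      Finset.image_congr fun M hM => by
        rw [Finset.mem_coe, Finset.mem_filter] at hM
        simp [hφ, hM.2]
    have h2 : (𝓜.filter (fun M => e ∉ M)).image φ = 𝓜.filter (fun M => e ∉ M) := by
      rw [Finset.image_congr (g := id) (fun M hM => by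
        rw [Finset.mem_coe, Finset.mem_filter] at hM
        simp [hφ, hM.2]), Finset.image_id]
    rw [h𝓜']
    conv_rhs => rw [← Finset.filter_union_filter_not_eq (fun M => e ∈ M) 𝓜]
    rw [Finset.image_union, h1, h2, Finset.union_comm]
  have hF : flowF 𝓜' c' = flowF 𝓜 c := by
    unfold flowF
    rw [h𝓜'img, Finset.coe_image, Set.image_image]
    congr 1
    exact Set.image_congr fun M hM => hsumφ M hM
  have hcard : 𝓜'.card = 𝓜.card := by
    rw [h𝓜'img]
    exact Finset.card_image_of_injOn fun M hM N hN h =>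
      hinj M (by simpa using hM) N (by simpa using hN) h
  have hfilt : ∀ (g : α), (∀ M ∈ 𝓜, (g ∈ φ M ↔ g ∈ M)) →
      𝓜'.filter (fun M => g ∈ M) = (𝓜.filter (fun M => g ∈ M)).image φ := by
    intro g hg
    rw [h𝓜'img, Finset.filter_image]
    congr 1
    exact Finset.filter_congr fun M hM => by simp [hg M hM]
  have hfilt₁ : 𝓜'.filter (fun M => e₁ ∈ M) = (𝓜.filter (fun M => e ∈ M)).image φ := by
    rw [h𝓜'img, Finset.filter_image]
    congr 1
    exact Finset.filter_congr fun M hM => by simp [he₁φ M hM]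
  have hfilt₂ : 𝓜'.filter (fun M => e₂ ∈ M) = (𝓜.filter (fun M => e ∈ M)).image φ := by
    rw [h𝓜'img, Finset.filter_image]
    congr 1
    exact Finset.filter_congr fun M hM => by simp [he₂φ M hM]
  have hinjf : ∀ (p : Finset α → Prop) [DecidablePred p],
      ∀ M ∈ 𝓜.filter p, ∀ N ∈ 𝓜.filter p, φ M = φ N → M = N := by
    intro p _ M hM N hN h
    exact hinj M (Finset.mem_filter.1 hM).1 N (Finset.mem_filter.1 hN).1 h
  refine ⟨hF, ?_, ?_⟩
  · unfold MC
    rw [hF, hcard, hfilt₁, hfilt₂,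
      Finset.sum_image (hinjf _), Finset.sum_image (hinjf _), ← mul_add,
      ← Finset.sum_add_distrib]
    congr 1
    refine Finset.sum_congr rfl fun M hM => ?_
    rw [hsumφ M (Finset.mem_filter.1 hM).1, ← add_div, hsum]
  · intro f hf
    have hfE := Finset.mem_of_mem_erase hf
    have hfe := (Finset.mem_erase.1 hf).1
    unfold MC
    rw [hF, hcard, hfilt f (fun M hM => hmemφ M hM f hfE hfe), Finset.sum_image (hinjf _)]
    congr 1
    refine Finset.sum_congr rfl fun M hM => ?_
    rw [hsumφ M (Finset.mem_filter.1 hM).1, hoff f hf]
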